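/- Alikhanov's inequality in a Hilbert space: Let H be a real Hilbert space, α ∈ (0,1), and u ∈ C¹([0,T];H). Then for all t ∈ (0,T], ⟨∂_t^α u(t), u(t)⟩_H ≥ (1/2) ∂_t^α ‖u‖_H² (t), where ∂_t^α v = g_{1-α} * v'. -/

import Mathlib

/-! With `w(s) = u(t) - u(s)`, the difference of the two sides is
`Γ(1-α)⁻¹ ∫₀ᵗ (t-s)^(-α) ⟪u'(s), w(s)⟫ ds = -Γ(1-α)⁻¹ ∫₀ᵗ (t-s)^(-α) (‖w‖²/2)'(s) ds`.
Integrating by parts on `[0, b]` with `b < t`, the boundary term at `0` and the integral of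
`α (t-s)^(-α-1) ‖w‖²/2` are nonnegative, while the boundary term at `b` is `O((t-b)^(2-α))`
since `‖w(b)‖ ≤ M (t-b)`; letting `b → t` gives the inequality. -/

open MeasureTheory Set
open scoped RealInnerProductSpace

/-- Riemann–Liouville kernel `g_α(t) = t^(α-1)/Γ(α)`. -/
noncomputable def rlK (α t : ℝ) : ℝ := t ^ (α - 1) / Real.Gamma α

open Filter Topology intervalIntegral

lemma intervalIntegrable_sub_rpow {r : ℝ} (hr : -1 < r) (a t : ℝ) :
    IntervalIntegrable (fun s : ℝ => (t - s) ^ r) volume a t := by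
  simpa using (intervalIntegrable_rpow' hr (a := t - a) (b := t - t)).comp_sub_left t

lemma intervalIntegrable_rlK_sub {β : ℝ} (hβ : 0 < β) (a t : ℝ) :
    IntervalIntegrable (fun s : ℝ => rlK β (t - s)) volume a t :=
  (intervalIntegrable_sub_rpow (by linarith) a t).div_const _

lemma rlK_one_sub (α τ : ℝ) : rlK (1 - α) τ = (Real.Gamma (1 - α))⁻¹ * τ ^ (-α) := by
  rw [rlK, sub_sub_cancel_left, div_eq_inv_mul]

theorem integral_mul_deriv_le_mul_of_nonneg {U U' V V' : ℝ → ℝ} {a b : ℝ} (hab : a ≤ b)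
    (hU : ∀ x ∈ Icc a b, HasDerivAt U (U' x) x) (hV : ∀ x ∈ Icc a b, HasDerivAt V (V' x) x)
    (hU'int : IntervalIntegrable U' volume a b) (hV'int : IntervalIntegrable V' volume a b)
    (hU' : ∀ x ∈ Icc a b, 0 ≤ U' x) (hUa : 0 ≤ U a) (hV0 : ∀ x ∈ Icc a b, 0 ≤ V x) :
    ∫ x in a..b, U x * V' x ≤ U b * V b := by
  rw [← uIcc_of_le hab] at hU hV
  rw [integral_mul_deriv_eq_deriv_mul hU hV hU'int hV'int]
  have hrest : 0 ≤ ∫ x in a..b, U' x * V x :=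
    integral_nonneg hab fun x hx => mul_nonneg (hU' x hx) (hV0 x hx)
  have hleft : 0 ≤ U a * V a := mul_nonneg hUa (hV0 a (left_mem_Icc.2 hab))
  linarith

section Hilbert

variable {H : Type*} [NormedAddCommGroup H] [InnerProductSpace ℝ H]

lemma inner_intervalIntegral_left [CompleteSpace H] {f : ℝ → H} {a b : ℝ}
    (hf : IntervalIntegrable f volume a b) (c : H) :
    ⟪∫ s in a..b, f s, c⟫ = ∫ s in a..b, ⟪f s, c⟫ := by
  simpa only [innerSL_apply_apply, real_inner_comm c] using
    ((innerSL ℝ c).intervalIntegral_comp_comm hf).symm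

theorem integral_sub_rpow_mul_inner_deriv_le {w w' : ℝ → H} {α a b t : ℝ} (hα : 0 ≤ α)
    (hab : a ≤ b) (hbt : b < t) (hw : ∀ s ∈ Icc a b, HasDerivAt w (w' s) s)
    (hw' : ContinuousOn w' (Icc a b)) :
    ∫ s in a..b, (t - s) ^ (-α) * ⟪w' s, w s⟫ ≤ (t - b) ^ (-α) * (‖w b‖ ^ 2 / 2) := by
  have hts : ∀ s ∈ Icc a b, 0 < t - s := fun s hs => by linarith [hs.2]
  have hkernel : ∀ s ∈ Icc a b,
      HasDerivAt (fun x => (t - x) ^ (-α)) (α * (t - s) ^ (-α - 1)) s := fun s hs =>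
    (((hasDerivAt_id s).const_sub t).rpow_const (Or.inl (hts s hs).ne')).congr_deriv
      (by rw [id]; ring)
  have hnormsq : ∀ s ∈ Icc a b, HasDerivAt (fun x => ‖w x‖ ^ 2 / 2) ⟪w' s, w s⟫ s :=
    fun s hs => ((hw s hs).norm_sq.div_const 2).congr_deriv (by rw [real_inner_comm]; ring)
  have hwcont : ContinuousOn w (Icc a b) := fun s hs => (hw s hs).continuousAt.continuousWithinAt
  refine integral_mul_deriv_le_mul_of_nonneg hab hkernel hnormsq ?_ ?_
    (fun s hs => mul_nonneg hα (Real.rpow_nonneg (hts s hs).le _))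
    (Real.rpow_nonneg (hts a (left_mem_Icc.2 hab)).le _) (fun s _ => by positivity)
  · refine ContinuousOn.intervalIntegrable ?_
    rw [uIcc_of_le hab]
    exact continuousOn_const.mul <| (continuousOn_const.sub continuousOn_id).rpow_const
      fun s hs => Or.inl (hts s hs).ne'
  · exact ContinuousOn.intervalIntegrable (by rw [uIcc_of_le hab]; exact hw'.inner hwcont)

theorem integral_sub_rpow_mul_inner_sub_nonneg {u u' : ℝ → H} {α a t : ℝ} (hα₀ : 0 ≤ α)
    (hα₁ : α < 1) (hat : a < t) (hu : ∀ s ∈ Icc a t, HasDerivAt u (u' s) s)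
    (hu' : ContinuousOn u' (Icc a t)) :
    0 ≤ ∫ s in a..t, (t - s) ^ (-α) * ⟪u' s, u t - u s⟫ := by
  obtain ⟨M, hM⟩ := isCompact_Icc.exists_bound_of_continuousOn hu'
  have hucont : ContinuousOn u (Icc a t) := fun s hs => (hu s hs).continuousAt.continuousWithinAt
  have hlip : ∀ b ∈ Icc a t, ‖u t - u b‖ ≤ M * (t - b) := fun b hb => by
    simpa [abs_of_nonneg (sub_nonneg.2 hb.2)] using
      (convex_Icc a t).norm_image_sub_le_of_norm_hasDerivWithin_le
        (fun x hx => (hu x hx).hasDerivWithinAt) hM hb (right_mem_Icc.2 hat.le)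
  set F := fun b => ∫ s in a..b, (t - s) ^ (-α) * ⟪u' s, u t - u s⟫
  have hint : IntervalIntegrable (fun s => (t - s) ^ (-α) * ⟪u' s, u t - u s⟫) volume a t :=
    (intervalIntegrable_sub_rpow (by linarith) a t).mul_continuousOn
      (by rw [uIcc_of_le hat.le]; exact hu'.inner (continuousOn_const.sub hucont))
  have hF : Tendsto F (𝓝[Ico a t] t) (𝓝 (F t)) :=
    ((continuousOn_primitive_interval' hint left_mem_uIcc t right_mem_uIcc).mono
      (by rw [uIcc_of_le hat.le]; exact Ico_subset_Icc_self))
  have hbound : ∀ b ∈ Ico a t, -(M ^ 2 / 2 * (t - b) ^ (2 - α)) ≤ F b := fun b hb => by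
    have htb : 0 < t - b := sub_pos.2 hb.2
    have hsub : Icc a b ⊆ Icc a t := Icc_subset_Icc_right hb.2.le
    have hIBP := integral_sub_rpow_mul_inner_deriv_le (w := fun s => u t - u s)
      (w' := fun s => -u' s) hα₀ hb.1 hb.2 (fun s hs => (hu s (hsub hs)).const_sub _)
      (hu'.mono hsub).neg
    have hw : ‖u t - u b‖ ^ 2 ≤ M ^ 2 * (t - b) ^ 2 := by
      rw [← mul_pow]; exact pow_le_pow_left₀ (norm_nonneg _) (hlip b ⟨hb.1, hb.2.le⟩) 2
    have hpow : (t - b) ^ (2 - α) = (t - b) ^ (-α) * (t - b) ^ 2 := by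
      rw [show (2:ℝ) - α = -α + 2 by ring, Real.rpow_add htb, Real.rpow_two]
    simp only [inner_neg_left, mul_neg, intervalIntegral.integral_neg] at hIBP
    have := mul_le_mul_of_nonneg_left hw (Real.rpow_nonneg htb.le (-α))
    rw [hpow]
    linarith
  have hlim : Tendsto (fun b => -(M ^ 2 / 2 * (t - b) ^ (2 - α))) (𝓝[Ico a t] t) (𝓝 0) := by
    have hc : Continuous fun b : ℝ => -(M ^ 2 / 2 * (t - b) ^ (2 - α)) :=
      (continuous_const.mul ((Real.continuous_rpow_const (by linarith)).comp
        (continuous_const.sub continuous_id))).neg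
    simpa [Real.zero_rpow (by linarith : (2:ℝ) - α ≠ 0)] using
      (hc.tendsto t).mono_left nhdsWithin_le_nhds
  have := right_nhdsWithin_Ico_neBot hat
  exact le_of_tendsto_of_tendsto hlim hF (eventually_nhdsWithin_of_forall hbound)

end Hilbert

theorem alikhanov_hilbert_general {H : Type*} [NormedAddCommGroup H] [InnerProductSpace ℝ H]
    [CompleteSpace H] (α T : ℝ) (hα : α ∈ Set.Ioo (0:ℝ) 1)
    (u u' : ℝ → H) (hu : ∀ t ∈ Set.Icc (0:ℝ) T, HasDerivAt u (u' t) t)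
    (hu' : ContinuousOn u' (Set.Icc 0 T)) :
    ∀ t ∈ Set.Ioc (0:ℝ) T,
      ⟪∫ s in (0:ℝ)..t, rlK (1 - α) (t - s) • u' s, u t⟫ ≥
        (1 / 2) * ∫ s in (0:ℝ)..t, rlK (1 - α) (t - s) * (2 * ⟪u' s, u s⟫) := by
  rintro t ⟨ht, htT⟩
  have hsub : Icc 0 t ⊆ Icc 0 T := Icc_subset_Icc_right htT
  have hu_t : ∀ s ∈ Icc 0 t, HasDerivAt u (u' s) s := fun s hs => hu s (hsub hs)
  have hu'c : ContinuousOn u' (uIcc 0 t) := by rw [uIcc_of_le ht.le]; exact hu'.mono hsub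
  have huc : ContinuousOn u (uIcc 0 t) := by
    rw [uIcc_of_le ht.le]; exact fun s hs => (hu_t s hs).continuousAt.continuousWithinAt
  have hk := intervalIntegrable_rlK_sub (by linarith [hα.2] : 0 < 1 - α) 0 t
  have hdefect : 0 ≤ ∫ s in 0..t, rlK (1 - α) (t - s) * ⟪u' s, u t - u s⟫ := by
    simp only [rlK_one_sub, mul_assoc, intervalIntegral.integral_const_mul]
    exact mul_nonneg (inv_nonneg.2 (Real.Gamma_pos_of_pos (by linarith [hα.2])).le)
      (integral_sub_rpow_mul_inner_sub_nonneg hα.1.le hα.2 ht hu_t (hu'.mono hsub))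
  simp only [inner_sub_right, mul_sub] at hdefect
  rw [intervalIntegral.integral_sub (hk.mul_continuousOn (hu'c.inner continuousOn_const))
    (hk.mul_continuousOn (hu'c.inner huc)), sub_nonneg] at hdefect
  calc (1 / 2) * ∫ s in (0:ℝ)..t, rlK (1 - α) (t - s) * (2 * ⟪u' s, u s⟫)
      = ∫ s in (0:ℝ)..t, rlK (1 - α) (t - s) * ⟪u' s, u s⟫ := by
        rw [← intervalIntegral.integral_const_mul]; congr 1; ext s; ring
    _ ≤ ∫ s in (0:ℝ)..t, rlK (1 - α) (t - s) * ⟪u' s, u t⟫ := hdefect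
    _ = ⟪∫ s in (0:ℝ)..t, rlK (1 - α) (t - s) • u' s, u t⟫ := by
        simp only [inner_intervalIntegral_left (hk.smul_continuousOn hu'c), real_inner_smul_left]

/-- Alikhanov's inequality in a real Hilbert space `H`: for `α ∈ (0,1)` and
`u ∈ C¹([0,T];H)`, `⟨∂ₜ^α u(t), u(t)⟩ ≥ (1/2) ∂ₜ^α ‖u‖²(t)` for all `t ∈ (0,T]`,
where `∂ₜ^α v = g_{1-α} * v'` and `(d/ds)‖u(s)‖² = 2⟨u'(s), u(s)⟩`. -/
theorem alikhanov_hilbert {H : Type*} [NormedAddCommGroup H] [InnerProductSpace ℝ H]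
    [CompleteSpace H] (α T : ℝ) (hα : α ∈ Set.Ioo (0:ℝ) 1) (hT : 0 < T)
    (u u' : ℝ → H) (hu : ∀ t ∈ Set.Icc (0:ℝ) T, HasDerivAt u (u' t) t)
    (hu' : ContinuousOn u' (Set.Icc 0 T)) :
    ∀ t ∈ Set.Ioc (0:ℝ) T,
      ⟪∫ s in (0:ℝ)..t, rlK (1 - α) (t - s) • u' s, u t⟫ ≥
        (1 / 2) * ∫ s in (0:ℝ)..t, rlK (1 - α) (t - s) * (2 * ⟪u' s, u s⟫) :=
  alikhanov_hilbert_general α T hα u u' hu hu'
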